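/- Let (M,g) be a complete m-dimensional manifold with a pole whose radial curvature satisfies −a²/(1+r²) ≤ K_r ≤ b²/(1+r²) with a ≥ 0, b² ∈ [0,1/4], and 2 + (m−1)(1+√(1−4b²)) − p(1+√(1+4a²)) > 0. Then the eigenvalues of Hess(r²) satisfy Σᵢλᵢ − p·λ_m ≥ 2[1 − p/2 + (m−1)(1+√(1−4b²))/2 − (p/2)√(1+4a²)]. -/

import Mathlib

/-!
Write `c = ⟪x, u⟫` for a unit eigenvector `x` of `Hess(r²) = 2 dr⊗dr + 2r Hess(r)`, with eigenvalue
`λ`. Since `Hess(r)` kills `u = ∇r`, only the component of `x` orthogonal to `u`, of squared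
length `1 - c²`, sees it, so the Hessian comparison gives
`2c² + α(1 - c²) ≤ λ ≤ 2c² + β(1 - c²) ≤ β` with `α = 1 + √(1 - 4b²)`, `β = 1 + √(1 + 4a²) ≥ 2`.
Summing the lower bound over an orthonormal eigenbasis and using Parseval, `∑ c² = ‖u‖² = 1`,
gives `∑ λᵢ ≥ (m + 1)α + 2 - α`, while `p λ_max ≤ p β`.
-/

open RealInnerProductSpace

section

variable {E : Type*} [NormedAddCommGroup E] [InnerProductSpace ℝ E] {u : E}

lemma inner_sub_inner_smul_self_eq_zero (hu : ‖u‖ = 1) (x : E) : ⟪x - ⟪x, u⟫ • u, u⟫ = 0 := by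
  rw [inner_sub_left, real_inner_smul_left, real_inner_self_eq_norm_sq, hu]
  ring

lemma norm_sub_inner_smul_sq (hu : ‖u‖ = 1) (x : E) :
    ‖x - ⟪x, u⟫ • u‖ ^ 2 = ‖x‖ ^ 2 - ⟪x, u⟫ ^ 2 := by
  rw [norm_sub_sq_real, norm_smul, real_inner_smul_right, hu, Real.norm_eq_abs, mul_one, sq_abs]
  ring

variable {A : E →ₗ[ℝ] E}

lemma inner_map_self_eq_inner_map_sub_inner_smul (hA : ∀ v w, ⟪A v, w⟫ = ⟪v, A w⟫)
    (hAu : A u = 0) (x : E) : ⟪A x, x⟫ = ⟪A (x - ⟪x, u⟫ • u), x - ⟪x, u⟫ • u⟫ := by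
  have hAxu : ⟪A x, u⟫ = 0 := by rw [hA, hAu, inner_zero_right]
  rw [map_sub, map_smul, hAu, smul_zero, sub_zero, inner_sub_right, real_inner_smul_right, hAxu,
    mul_zero, sub_zero]

lemma le_inner_map_self_of_orthogonal (hu : ‖u‖ = 1) (hA : ∀ v w, ⟪A v, w⟫ = ⟪v, A w⟫)
    (hAu : A u = 0) {k : ℝ} (hk : ∀ v, ⟪v, u⟫ = 0 → k * ‖v‖ ^ 2 ≤ ⟪A v, v⟫) (x : E) :
    k * (‖x‖ ^ 2 - ⟪x, u⟫ ^ 2) ≤ ⟪A x, x⟫ := by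
  rw [← norm_sub_inner_smul_sq hu, inner_map_self_eq_inner_map_sub_inner_smul hA hAu]
  exact hk _ (inner_sub_inner_smul_self_eq_zero hu x)

lemma inner_map_self_le_of_orthogonal (hu : ‖u‖ = 1) (hA : ∀ v w, ⟪A v, w⟫ = ⟪v, A w⟫)
    (hAu : A u = 0) {k : ℝ} (hk : ∀ v, ⟪v, u⟫ = 0 → ⟪A v, v⟫ ≤ k * ‖v‖ ^ 2) (x : E) :
    ⟪A x, x⟫ ≤ k * (‖x‖ ^ 2 - ⟪x, u⟫ ^ 2) := by
  rw [← norm_sub_inner_smul_sq hu, inner_map_self_eq_inner_map_sub_inner_smul hA hAu]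
  exact hk _ (inner_sub_inner_smul_self_eq_zero hu x)

lemma eigenvalue_eq_of_norm_eq_one {x : E} (hx : ‖x‖ = 1) {r μ : ℝ}
    (h : (2 * ⟪x, u⟫) • u + (2 * r) • A x = μ • x) :
    μ = 2 * ⟪x, u⟫ ^ 2 + 2 * r * ⟪A x, x⟫ := by
  have hx' := congrArg (⟪·, x⟫) h
  simp only [inner_add_left, real_inner_smul_left, real_inner_self_eq_norm_sq, hx] at hx'
  rw [real_inner_comm x u] at hx'
  linear_combination -hx'

lemma le_eigenvalue_of_orthogonal (hu : ‖u‖ = 1) (hA : ∀ v w, ⟪A v, w⟫ = ⟪v, A w⟫)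
    (hAu : A u = 0) {x : E} (hx : ‖x‖ = 1) {r α μ : ℝ} (hr : 0 < r)
    (hα : ∀ v, ⟪v, u⟫ = 0 → α / (2 * r) * ‖v‖ ^ 2 ≤ ⟪A v, v⟫)
    (h : (2 * ⟪x, u⟫) • u + (2 * r) • A x = μ • x) :
    2 * ⟪x, u⟫ ^ 2 + α * (1 - ⟪x, u⟫ ^ 2) ≤ μ := by
  have hAx := le_inner_map_self_of_orthogonal hu hA hAu hα x
  rw [hx, one_pow, div_mul_eq_mul_div, div_le_iff₀ (by positivity)] at hAx
  rw [eigenvalue_eq_of_norm_eq_one hx h]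
  linarith

lemma eigenvalue_le_of_orthogonal (hu : ‖u‖ = 1) (hA : ∀ v w, ⟪A v, w⟫ = ⟪v, A w⟫)
    (hAu : A u = 0) {x : E} (hx : ‖x‖ = 1) {r β μ : ℝ} (hr : 0 < r) (hβ : 2 ≤ β)
    (hβA : ∀ v, ⟪v, u⟫ = 0 → ⟪A v, v⟫ ≤ β / (2 * r) * ‖v‖ ^ 2)
    (h : (2 * ⟪x, u⟫) • u + (2 * r) • A x = μ • x) :
    μ ≤ β := by
  have hAx := inner_map_self_le_of_orthogonal hu hA hAu hβA x
  rw [hx, one_pow, div_mul_eq_mul_div, le_div_iff₀ (by positivity)] at hAx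
  rw [eigenvalue_eq_of_norm_eq_one hx h]
  nlinarith [sq_nonneg ⟪x, u⟫]

lemma card_mul_add_le_sum_eigenvalues {ι : Type*} [Fintype ι] (b : OrthonormalBasis ι ℝ E)
    (hu : ‖u‖ = 1) (hA : ∀ v w, ⟪A v, w⟫ = ⟪v, A w⟫) (hAu : A u = 0) {r α : ℝ} (hr : 0 < r)
    (hα : ∀ v, ⟪v, u⟫ = 0 → α / (2 * r) * ‖v‖ ^ 2 ≤ ⟪A v, v⟫) (lam : ι → ℝ)
    (hb : ∀ i, (2 * ⟪b i, u⟫) • u + (2 * r) • A (b i) = lam i • b i) :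
    Fintype.card ι * α + (2 - α) ≤ ∑ i, lam i := by
  have hParseval : ∑ i, ⟪b i, u⟫ ^ 2 = 1 := by rw [b.sum_sq_inner_right, hu, one_pow]
  calc Fintype.card ι * α + (2 - α) = ∑ i, (α + (2 - α) * ⟪b i, u⟫ ^ 2) := by
        rw [Finset.sum_add_distrib, ← Finset.mul_sum, hParseval, Finset.sum_const,
          Finset.card_univ, nsmul_eq_mul]
        ring
    _ ≤ ∑ i, lam i := Finset.sum_le_sum fun i _ => by
        linarith [le_eigenvalue_of_orthogonal hu hA hAu (b.orthonormal.1 i) hr hα (hb i)]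

end

theorem hessian_eigenvalue_estimate_quadratic_decay_general {E : Type*} [NormedAddCommGroup E]
    [InnerProductSpace ℝ E] {m : ℕ}
    (p r a bb : ℝ) (hp : 1 ≤ p) (hr : 0 < r)
    (ρv : E) (hρv : ‖ρv‖ = 1)
    (A : E →ₗ[ℝ] E) (hAsym : ∀ v w, ⟪A v, w⟫ = ⟪v, A w⟫) (hAρ : A ρv = 0)
    (hA_lb : ∀ v, ⟪v, ρv⟫ = 0 →
      (1 + Real.sqrt (1 - 4 * bb ^ 2)) / (2 * r) * ‖v‖ ^ 2 ≤ ⟪A v, v⟫)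
    (hA_ub : ∀ v, ⟪v, ρv⟫ = 0 →
      ⟪A v, v⟫ ≤ (1 + Real.sqrt (1 + 4 * a ^ 2)) / (2 * r) * ‖v‖ ^ 2)
    (lam : Fin (m + 1) → ℝ)
    (b : OrthonormalBasis (Fin (m + 1)) ℝ E)
    (hb : ∀ i, (2 * ⟪b i, ρv⟫) • ρv + (2 * r) • A (b i) = lam i • b i) :
    2 * (1 - p / 2 + (m : ℝ) * (1 + Real.sqrt (1 - 4 * bb ^ 2)) / 2
        - p / 2 * Real.sqrt (1 + 4 * a ^ 2))
      ≤ (∑ i, lam i) - p * lam (Fin.last m) := by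
  have hβ : 2 ≤ 1 + Real.sqrt (1 + 4 * a ^ 2) := by
    have : 1 ≤ Real.sqrt (1 + 4 * a ^ 2) := Real.one_le_sqrt.mpr (by nlinarith [sq_nonneg a])
    linarith
  have hsum := card_mul_add_le_sum_eigenvalues b hρv hAsym hAρ hr hA_lb lam hb
  have hlast := eigenvalue_le_of_orthogonal hρv hAsym hAρ (b.orthonormal.1 (Fin.last m)) hr hβ
    hA_ub (hb (Fin.last m))
  rw [Fintype.card_fin, Nat.cast_add_one] at hsum
  linarith [mul_le_mul_of_nonneg_left hlast (by linarith : (0 : ℝ) ≤ p)]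

/-- eigenvalue estimate under radial curvature bounds
`−a²/(1+r²) ≤ K_r ≤ b²/(1+r²)`.  The curvature condition enters (as in the Hessian
comparison of the context) through the bounds
`((1+√(1−4b²))/(2r))[g−dr⊗dr] ≤ Hess(r) ≤ ((1+√(1+4a²))/(2r))[g−dr⊗dr]` on the
self-adjoint operator `A` representing `Hess(r)`.  The manifold has dimension `m + 1`
and `lam 0 ≤ … ≤ lam m` are the eigenvalues of `Hess(r²) = 2 dr⊗dr + 2r Hess(r)`.
Then `Σᵢ λᵢ − p·λ_max ≥ 2[1 − p/2 + ((m+1)−1)(1+√(1−4b²))/2 − (p/2)√(1+4a²)]`. -/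
theorem hessian_eigenvalue_estimate_quadratic_decay {E : Type*} [NormedAddCommGroup E]
    [InnerProductSpace ℝ E] {m : ℕ}
    (p r a bb : ℝ) (hp : 1 ≤ p) (hr : 0 < r)
    (ha : 0 ≤ a) (hbb : bb ^ 2 ≤ 1 / 4)
    (hdim : 0 < 2 + (m : ℝ) * (1 + Real.sqrt (1 - 4 * bb ^ 2))
      - p * (1 + Real.sqrt (1 + 4 * a ^ 2)))
    (ρv : E) (hρv : ‖ρv‖ = 1)
    (A : E →ₗ[ℝ] E) (hAsym : ∀ v w, ⟪A v, w⟫ = ⟪v, A w⟫) (hAρ : A ρv = 0)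
    (hA_lb : ∀ v, ⟪v, ρv⟫ = 0 →
      (1 + Real.sqrt (1 - 4 * bb ^ 2)) / (2 * r) * ‖v‖ ^ 2 ≤ ⟪A v, v⟫)
    (hA_ub : ∀ v, ⟪v, ρv⟫ = 0 →
      ⟪A v, v⟫ ≤ (1 + Real.sqrt (1 + 4 * a ^ 2)) / (2 * r) * ‖v‖ ^ 2)
    (lam : Fin (m + 1) → ℝ) (hmono : Monotone lam)
    (b : OrthonormalBasis (Fin (m + 1)) ℝ E)
    (hb : ∀ i, (2 * ⟪b i, ρv⟫) • ρv + (2 * r) • A (b i) = lam i • b i) :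
    2 * (1 - p / 2 + (m : ℝ) * (1 + Real.sqrt (1 - 4 * bb ^ 2)) / 2
        - p / 2 * Real.sqrt (1 + 4 * a ^ 2))
      ≤ (∑ i, lam i) - p * lam (Fin.last m) :=
  hessian_eigenvalue_estimate_quadratic_decay_general p r a bb hp hr ρv hρv A hAsym hAρ hA_lb hA_ub
    lam b hb
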